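/- Let r ≥ 2 and let F be a homogeneous polynomial of degree 2 in r real variables x₁,…,x_r that vanishes on the affine cone of the rational normal curve, i.e., F(s^{r−1}, s^{r−2}t, …, s^{r−1−i}t^{i}, …, t^{r−1}) = 0 for all s,t ∈ ℝ. If there exist homogeneous linear forms G and H in x₁,…,x_r such that F lies in the linear span of G², G·H, and H², then F = 0. (In other words, the space of quadratic polynomials vanishing on the rational normal curve contains no nonzero element of rank ≤ 2.) -/

import Mathlib

/-!
On the chart `s = 1` the rational normal curve is the moment curve `t ↦ (1, t, …, t^(r-1))`, and
restricting to it sends a linear form `∑ cᵢ xᵢ` to `∑ cᵢ tⁱ ∈ ℝ[t]`; so restriction is injective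
on linear forms. If `F = a G² + b GH + c H²` vanishes on the curve, the restrictions `g`, `h` of
`G`, `H` satisfy `a g² + b gh + c h² = 0` in the domain `ℝ[t]`. For a nonnegative discriminant
the form splits into real linear factors, one of which kills `(g, h)`; for a negative one
`(g(t), h(t))` is a real zero of a definite form, so `g = 0`. Either way `G` and `H` are
proportional, so `F = k H²` (or `k G²`), and `k h² = 0` forces `k = 0` or `H = 0`.
-/

open MvPolynomial
open scoped Polynomial

section BinaryQuadratic

variable {R A B : Type*} [CommRing R] [CommRing A] [Algebra R A] [CommRing B] [Algebra R B]

def binaryQuadratic (a b c : R) (g h : A) : A := a • g ^ 2 + b • (g * h) + c • h ^ 2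

theorem binaryQuadratic_swap (a b c : R) (g h : A) :
    binaryQuadratic a b c g h = binaryQuadratic c b a h g := by
  rw [binaryQuadratic, binaryQuadratic, mul_comm g h]
  abel

theorem map_binaryQuadratic (f : A →ₐ[R] B) (a b c : R) (g h : A) :
    f (binaryQuadratic a b c g h) = binaryQuadratic a b c (f g) (f h) := by
  simp only [binaryQuadratic, map_add, map_smul, map_mul, map_pow]

theorem binaryQuadratic_smul_left (a b c μ : R) (h : A) :
    binaryQuadratic a b c (μ • h) h = (a * μ ^ 2 + b * μ + c) • h ^ 2 := by
  rw [binaryQuadratic, smul_pow, smul_mul_assoc, ← sq]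
  module

theorem binaryQuadratic_vieta (a μ₁ μ₂ : R) (g h : A) :
    binaryQuadratic a (-(a * (μ₁ + μ₂))) (a * (μ₁ * μ₂)) g h =
      a • ((g - μ₁ • h) * (g - μ₂ • h)) := by
  simp only [binaryQuadratic, Algebra.smul_def, map_mul, map_neg, map_add]
  ring

end BinaryQuadratic

theorem eq_zero_of_binaryQuadratic_eq_zero_of_discrim_neg {K : Type*} [CommRing K] [LinearOrder K]
    [IsStrictOrderedRing K] {a b c u v : K} (hD : discrim a b c < 0)
    (h : binaryQuadratic a b c u v = 0) : u = 0 := by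
  have hsq : discrim a b c * u ^ 2 = (2 * c * v + b * u) ^ 2 := by
    rw [binaryQuadratic] at h
    simp only [smul_eq_mul] at h
    rw [discrim]
    linear_combination (-4 * c) * h
  have hu : u ^ 2 ≤ 0 := nonpos_of_mul_nonneg_right (hsq ▸ sq_nonneg _) hD
  exact pow_eq_zero_iff two_ne_zero |>.mp (le_antisymm hu (sq_nonneg u))

namespace Polynomial

theorem exists_eq_smul_of_binaryQuadratic_eq_zero {a b c : ℝ} {g h : ℝ[X]}
    (ha : a ≠ 0) (hq : binaryQuadratic a b c g h = 0) : ∃ μ : ℝ, g = μ • h := by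
  rcases lt_or_ge (discrim a b c) 0 with hD | hD
  · refine ⟨0, Polynomial.funext fun t => ?_⟩
    have hqt := map_binaryQuadratic (aeval t) a b c g h
    rw [hq, map_zero] at hqt
    simpa using eq_zero_of_binaryQuadratic_eq_zero_of_discrim_neg hD hqt.symm
  · obtain ⟨μ₁, hμ₁⟩ :=
      exists_quadratic_eq_zero ha ⟨√(discrim a b c), (Real.mul_self_sqrt hD).symm⟩
    have hb : b = -(a * (μ₁ + (-b / a - μ₁))) := by field_simp; ring
    have hc : c = a * (μ₁ * (-b / a - μ₁)) := by field_simp; linear_combination hμ₁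
    rw [hb, hc, binaryQuadratic_vieta, smul_eq_zero, mul_eq_zero, sub_eq_zero, sub_eq_zero] at hq
    rcases hq with ha' | hμ | hμ
    exacts [absurd ha' ha, ⟨_, hμ⟩, ⟨_, hμ⟩]

theorem coeffs_eq_zero_or_exists_smul_of_binaryQuadratic_eq_zero {a b c : ℝ} {g h : ℝ[X]}
    (hq : binaryQuadratic a b c g h = 0) :
    (a = 0 ∧ b = 0 ∧ c = 0) ∨ ∃ μ : ℝ, g = μ • h ∨ h = μ • g := by
  rcases ne_or_eq a 0 with ha | rfl
  · obtain ⟨μ, hμ⟩ := exists_eq_smul_of_binaryQuadratic_eq_zero ha hq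
    exact Or.inr ⟨μ, Or.inl hμ⟩
  rcases ne_or_eq c 0 with hc | rfl
  · obtain ⟨μ, hμ⟩ := exists_eq_smul_of_binaryQuadratic_eq_zero hc
      (by rwa [binaryQuadratic_swap] at hq)
    exact Or.inr ⟨μ, Or.inr hμ⟩
  rcases eq_or_ne b 0 with rfl | hb
  · exact Or.inl ⟨rfl, rfl, rfl⟩
  · simp only [binaryQuadratic, zero_smul, add_zero, zero_add, smul_eq_zero, hb, false_or,
      mul_eq_zero] at hq
    refine Or.inr ⟨0, ?_⟩
    simpa using hq

end Polynomial

noncomputable def restrictToMomentCurve (r : ℕ) : MvPolynomial (Fin r) ℝ →ₐ[ℝ] ℝ[X] :=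
  aeval fun i => Polynomial.X ^ (i : ℕ)

theorem eval_restrictToMomentCurve {r : ℕ} (P : MvPolynomial (Fin r) ℝ) (t : ℝ) :
    (restrictToMomentCurve r P).eval t = MvPolynomial.eval (fun i : Fin r => t ^ (i : ℕ)) P := by
  rw [restrictToMomentCurve, ← Polynomial.coe_aeval_eq_eval, ← AlgHom.comp_apply, comp_aeval]
  simp

theorem eq_zero_of_restrictToMomentCurve_eq_zero {r : ℕ} {L : MvPolynomial (Fin r) ℝ}
    (hL : L.IsHomogeneous 1) (h : restrictToMomentCurve r L = 0) : L = 0 := by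
  have hmem : L ∈ Submodule.span ℝ (Set.range X) := by
    rw [← homogeneousSubmodule_one_eq_span_X]
    exact hL
  obtain ⟨c, rfl⟩ := Submodule.mem_span_range_iff_exists_fun ℝ |>.mp hmem
  have hc (j : Fin r) : c j = 0 := by
    simpa [restrictToMomentCurve, Polynomial.finsetSum_coeff, Polynomial.coeff_X_pow,
      Fin.val_inj] using congrArg (Polynomial.coeff · j) h
  simp [hc]

theorem eq_smul_of_restrictToMomentCurve_eq_smul {r : ℕ} {G H : MvPolynomial (Fin r) ℝ}
    (hG : G.IsHomogeneous 1) (hH : H.IsHomogeneous 1) {μ : ℝ}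
    (h : restrictToMomentCurve r G = μ • restrictToMomentCurve r H) : G = μ • H := by
  have hhom : (G - μ • H).IsHomogeneous 1 := by
    rw [smul_eq_C_mul]
    exact hG.sub ((isHomogeneous_C _ μ).mul hH)
  rw [← sub_eq_zero]
  exact eq_zero_of_restrictToMomentCurve_eq_zero hhom (by rw [map_sub, map_smul, h, sub_self])

theorem binaryQuadratic_eq_zero_of_eq_smul {r : ℕ} {G H : MvPolynomial (Fin r) ℝ}
    (hH : H.IsHomogeneous 1) {a b c μ : ℝ} (hGH : G = μ • H)
    (h : restrictToMomentCurve r (binaryQuadratic a b c G H) = 0) :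
    binaryQuadratic a b c G H = 0 := by
  rw [hGH, binaryQuadratic_smul_left] at h ⊢
  rw [map_smul, map_pow, smul_eq_zero, pow_eq_zero_iff two_ne_zero] at h
  rcases h with hk | hH0
  · rw [hk, zero_smul]
  · rw [eq_zero_of_restrictToMomentCurve_eq_zero hH hH0, zero_pow two_ne_zero, smul_zero]

theorem stmt_7 (r : ℕ) (F : MvPolynomial (Fin r) ℝ)
    (hvan : ∀ s t : ℝ,
      MvPolynomial.eval (fun i : Fin r => s ^ (r - 1 - (i : ℕ)) * t ^ (i : ℕ)) F = 0)
    (G H : MvPolynomial (Fin r) ℝ)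
    (hG : G.IsHomogeneous 1) (hH : H.IsHomogeneous 1)
    (hmem : F ∈ Submodule.span ℝ ({G ^ 2, G * H, H ^ 2} : Set (MvPolynomial (Fin r) ℝ))) :
    F = 0 := by
  obtain ⟨a, b, c, hF⟩ := Submodule.mem_span_triple.mp hmem
  replace hF : F = binaryQuadratic a b c G H := hF.symm
  subst hF
  have hres : restrictToMomentCurve r (binaryQuadratic a b c G H) = 0 :=
    Polynomial.funext fun t => by
      simpa only [eval_restrictToMomentCurve, one_pow, one_mul, Polynomial.eval_zero] using hvan 1 t
  have hq : binaryQuadratic a b c (restrictToMomentCurve r G) (restrictToMomentCurve r H) = 0 := by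
    rwa [map_binaryQuadratic] at hres
  rcases Polynomial.coeffs_eq_zero_or_exists_smul_of_binaryQuadratic_eq_zero hq with
    ⟨rfl, rfl, rfl⟩ | ⟨μ, hμ | hμ⟩
  · simp [binaryQuadratic]
  · exact binaryQuadratic_eq_zero_of_eq_smul hH
      (eq_smul_of_restrictToMomentCurve_eq_smul hG hH hμ) hres
  · rw [binaryQuadratic_swap] at hres ⊢
    exact binaryQuadratic_eq_zero_of_eq_smul hG
      (eq_smul_of_restrictToMomentCurve_eq_smul hH hG hμ) hres
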